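/- arXiv:1306.1064 — 3 statements merged into one kernel-verified Lean document; each statement's English description precedes it below -/
import Mathlib

section
/- The function k ↦ log(2 C_k D_k e^γ log² p_k) / (e · log(C_k log p_k)) is monotonically decreasing for k > 61 and tends to 2/e as k → ∞. -/
open Real Filter

noncomputable def pk (k : ℕ) : ℝ := (Nat.nth Nat.Prime (k - 1) : ℝ)
noncomputable def Ck (k : ℕ) : ℝ := Real.exp (0.261498 + 1 / (2 * (Real.log (pk k))^2))
noncomputable def Dk (k : ℕ) : ℝ := 2 * (Real.log (pk k))^2 / (2 * (Real.log (pk k))^2 - 1)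

noncomputable def f8 (k : ℕ) : ℝ :=
  Real.log (2 * Ck k * Dk k * Real.exp Real.eulerMascheroniConstant * (Real.log (pk k))^2) /
    (Real.exp 1 * Real.log (Ck k * Real.log (pk k)))

/-!
Put `L = log p_k` and `s = 1 / (2 L²)`, so that `C_k = exp (B + s)` and `D_k = (1 - s)⁻¹`.
Then the denominator is `e · u` with `u = log L + B + s`, and the numerator is `2u + c` with
`c = log 2 + γ - B - s - log (1 - s)`. Hence `f8 k = 2/e + c / (e u)`. As `L` grows, `u` increases
to `∞` while `c ≥ 0` decreases (because `-s - log (1 - s)` is increasing in `s ≥ 0`), which gives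
both the monotonicity and the limit.
-/

open Set

lemma monotoneOn_log_add_one_div_two_mul_sq :
    MonotoneOn (fun L : ℝ => log L + 1 / (2 * L ^ 2)) (Ici 1) := by
  intro L₁ (h₁ : 1 ≤ L₁) L₂ (h₂ : 1 ≤ L₂) h
  have hL₁ : 0 < L₁ := by linarith
  have hL₂ : 0 < L₂ := by linarith
  have hlog : (L₂ - L₁) / L₂ ≤ log L₂ - log L₁ := by
    have := one_sub_inv_le_log_of_pos (div_pos hL₂ hL₁)
    rw [log_div hL₂.ne' hL₁.ne', inv_div] at this
    rwa [sub_div, div_self hL₂.ne']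
  have hsq : 1 / (2 * L₁ ^ 2) - 1 / (2 * L₂ ^ 2) ≤ (L₂ - L₁) / L₂ := by
    rw [div_sub_div _ _ (by positivity) (by positivity), div_le_div_iff₀ (by positivity) hL₂]
    nlinarith [mul_nonneg (mul_nonneg (sub_nonneg.2 h) hL₂.le)
      (show 0 ≤ 2 * L₁ ^ 2 * L₂ - L₁ - L₂ by nlinarith [mul_le_mul_of_nonneg_left h₁ hL₁.le])]
  simp only
  linarith

lemma monotoneOn_neg_sub_log_one_sub :
    MonotoneOn (fun s : ℝ => -s - log (1 - s)) (Ico 0 1) := by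
  rintro s₁ ⟨h₁, -⟩ s₂ ⟨-, h₂⟩ h
  -- `log ((1 - s₁) / (1 - s₂)) ≥ 1 - (1 - s₂) / (1 - s₁) = (s₂ - s₁) / (1 - s₁) ≥ s₂ - s₁`
  have hlog := one_sub_inv_le_log_of_pos (div_pos (by linarith : 0 < 1 - s₁) (by linarith : 0 < 1 - s₂))
  rw [log_div (by linarith) (by linarith), inv_div] at hlog
  have : s₂ - s₁ ≤ 1 - (1 - s₂) / (1 - s₁) := by
    rw [one_sub_div (by linarith), le_div_iff₀ (by linarith)]
    nlinarith
  simp only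
  linarith

lemma neg_sub_log_one_sub_nonneg {s : ℝ} (hs : s < 1) : 0 ≤ -s - log (1 - s) := by
  linarith [log_le_sub_one_of_pos (by linarith : 0 < 1 - s)]

noncomputable def f8OfLog (B L : ℝ) : ℝ :=
  log (2 * exp (B + 1 / (2 * L ^ 2)) * (2 * L ^ 2 / (2 * L ^ 2 - 1)) *
      exp eulerMascheroniConstant * L ^ 2) /
    (exp 1 * log (exp (B + 1 / (2 * L ^ 2)) * L))

noncomputable def f8Den (B L : ℝ) : ℝ := log L + B + 1 / (2 * L ^ 2)

noncomputable def f8Excess (B L : ℝ) : ℝ :=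
  log 2 + eulerMascheroniConstant - B + (-(1 / (2 * L ^ 2)) - log (1 - 1 / (2 * L ^ 2)))

lemma f8_eq_comp : f8 = f8OfLog 0.261498 ∘ log ∘ pk := rfl

lemma one_div_two_mul_sq_mem_Ico {L : ℝ} (hL : 1 ≤ L) : 1 / (2 * L ^ 2) ∈ Ico 0 1 := by
  refine ⟨by positivity, ?_⟩
  rw [div_lt_one (by positivity)]
  nlinarith

lemma f8OfLog_eq (B : ℝ) {L : ℝ} (hL : 1 ≤ L) :
    f8OfLog B L = (2 * f8Den B L + f8Excess B L) / (exp 1 * f8Den B L) := by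
  have hL₀ : 0 < L := by linarith
  obtain ⟨-, hs⟩ := one_div_two_mul_sq_mem_Ico hL
  have hD : 2 * L ^ 2 / (2 * L ^ 2 - 1) = (1 - 1 / (2 * L ^ 2))⁻¹ := by
    field_simp
  have hD₀ : 0 < (1 - 1 / (2 * L ^ 2))⁻¹ := inv_pos.2 (by linarith)
  unfold f8OfLog f8Den f8Excess
  rw [hD, log_mul (by positivity) (by positivity), log_mul (by positivity) (by positivity),
    log_mul (by positivity) hD₀.ne', log_mul (by positivity) (by positivity),
    log_mul (by positivity) (by positivity), log_exp, log_exp, log_inv, log_pow]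
  push_cast
  ring

lemma f8Den_pos {B L : ℝ} (hB : 0 ≤ B) (hL : 1 ≤ L) : 0 < f8Den B L := by
  have := log_nonneg hL
  unfold f8Den
  positivity

lemma f8Excess_nonneg {B L : ℝ} (hB : B ≤ log 2 + eulerMascheroniConstant) (hL : 1 ≤ L) :
    0 ≤ f8Excess B L := by
  have := neg_sub_log_one_sub_nonneg (one_div_two_mul_sq_mem_Ico hL).2
  unfold f8Excess
  linarith

lemma antitoneOn_f8Excess (B : ℝ) : AntitoneOn (f8Excess B) (Ici 1) := by
  intro L₁ (h₁ : 1 ≤ L₁) L₂ (h₂ : 1 ≤ L₂) h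
  have hs : 1 / (2 * L₂ ^ 2) ≤ 1 / (2 * L₁ ^ 2) := by gcongr
  have := monotoneOn_neg_sub_log_one_sub (one_div_two_mul_sq_mem_Ico h₂)
    (one_div_two_mul_sq_mem_Ico h₁) hs
  simp only [f8Excess]
  linarith

lemma antitoneOn_f8OfLog {B : ℝ} (hB₀ : 0 ≤ B) (hB : B ≤ log 2 + eulerMascheroniConstant) :
    AntitoneOn (f8OfLog B) (Ici 1) := by
  intro L₁ (h₁ : 1 ≤ L₁) L₂ (h₂ : 1 ≤ L₂) h
  have hu₁ := f8Den_pos hB₀ h₁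
  have hu : f8Den B L₁ ≤ f8Den B L₂ := by
    have := monotoneOn_log_add_one_div_two_mul_sq h₁ h₂ h
    simp only [f8Den] at this ⊢
    linarith
  have split {L : ℝ} (hL : 1 ≤ L) :
      f8OfLog B L = 2 / exp 1 + f8Excess B L / (exp 1 * f8Den B L) := by
    rw [f8OfLog_eq B hL]
    field_simp [(f8Den_pos hB₀ hL).ne']
  rw [split h₁, split h₂, add_le_add_iff_left]
  exact div_le_div₀ (f8Excess_nonneg hB h₁) (antitoneOn_f8Excess B h₁ h₂ h) (by positivity)
    (by gcongr)

lemma tendsto_f8Den (B : ℝ) : Tendsto (f8Den B) atTop atTop := by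
  refine tendsto_atTop_mono (fun L => ?_) (tendsto_atTop_add_const_right _ B tendsto_log_atTop)
  exact le_add_of_nonneg_right (by positivity)

lemma tendsto_f8Excess (B : ℝ) :
    Tendsto (f8Excess B) atTop (nhds (log 2 + eulerMascheroniConstant - B)) := by
  have hs : Tendsto (fun L : ℝ => 1 / (2 * L ^ 2)) atTop (nhds 0) :=
    tendsto_const_nhds.div_atTop ((tendsto_pow_atTop two_ne_zero).const_mul_atTop two_pos)
  have := (hs.neg.sub ((hs.const_sub 1).log (by norm_num))).const_add
    (log 2 + eulerMascheroniConstant - B)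
  rwa [sub_zero, log_one, neg_zero, sub_zero, add_zero] at this

lemma tendsto_f8OfLog (B : ℝ) : Tendsto (f8OfLog B) atTop (nhds (2 / exp 1)) := by
  have hquot : Tendsto (fun L => f8Excess B L / f8Den B L) atTop (nhds 0) :=
    (tendsto_f8Excess B).div_atTop (tendsto_f8Den B)
  have := (hquot.const_add 2).div_const (exp 1)
  rw [add_zero] at this
  refine this.congr' ?_
  filter_upwards [eventually_ge_atTop 1, (tendsto_f8Den B).eventually_gt_atTop 0] with L hL hu
  rw [f8OfLog_eq B hL]
  field_simp

lemma monotone_pk : Monotone pk := fun k l h => by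
  unfold pk
  exact_mod_cast Nat.nth_monotone Nat.infinite_setOfPred_prime (by omega : k - 1 ≤ l - 1)

lemma le_pk (k : ℕ) : (k : ℝ) ≤ pk k := by
  have := Nat.add_two_le_nth_prime (k - 1)
  unfold pk
  exact_mod_cast (by omega : k ≤ Nat.nth Nat.Prime (k - 1))

lemma one_le_log_pk {k : ℕ} (hk : 3 ≤ k) : 1 ≤ log (pk k) := by
  have : (3 : ℝ) ≤ k := by exact_mod_cast hk
  rw [le_log_iff_exp_le (by linarith [le_pk k])]
  linarith [exp_one_lt_d9, le_pk k]

theorem f8_decreasing_and_tendsto :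
    (∀ k l : ℕ, 61 < k → k ≤ l → f8 l ≤ f8 k) ∧
    Tendsto f8 atTop (nhds (2 / Real.exp 1)) := by
  have hB₀ : (0 : ℝ) ≤ 0.261498 := by norm_num
  have hB : (0.261498 : ℝ) ≤ log 2 + eulerMascheroniConstant := by
    linarith [log_two_gt_d9, one_half_lt_eulerMascheroniConstant]
  rw [f8_eq_comp]
  refine ⟨fun k l hk hkl => ?_, ?_⟩
  · have hk₀ : (0 : ℝ) < pk k := (Nat.cast_pos.2 (by omega)).trans_le (le_pk k)
    exact antitoneOn_f8OfLog hB₀ hB (one_le_log_pk (by omega)) (one_le_log_pk (by omega))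
      (log_le_log hk₀ (monotone_pk hkl))
  · exact (tendsto_f8OfLog _).comp (tendsto_log_atTop.comp
      (tendsto_atTop_mono le_pk tendsto_natCast_atTop_atTop))
end

section
/- Let s be a positive integer. If s + 1 ≥ Z log(2 C_k D_k e^γ log² p_k) with Z = 2.159569 and k > 61, then C_k log p_k · (e log(C_k log p_k)/(s+1))^{s+1} ≤ 1/(2 e^γ D_k log p_k). -/
open Real

/-- Taylor bound for `exp` at `0.46305536`. -/
lemma exp_aux_le : Real.exp 0.46305536 ≤ 1.5889214 := by
  have h := Real.exp_bound (x := 0.46305536) (by rw [abs_of_nonneg (by norm_num)]; norm_num)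
    (n := 12) (by norm_num)
  have h2 := (abs_le.mp h).2
  rw [abs_of_nonneg (by norm_num : (0:ℝ) ≤ 0.46305536)] at h2
  have hxp : ((0.46305536:ℝ)) ^ 12 ≤ 1 := by
    apply pow_le_one₀ <;> norm_num
  have hrem : ((0.46305536:ℝ)) ^ 12 * ((Nat.succ 12 : ℕ) / (((12:ℕ).factorial : ℝ) * (12:ℕ))) ≤
      0.000000003 := by
    calc ((0.46305536:ℝ)) ^ 12 * ((Nat.succ 12 : ℕ) / (((12:ℕ).factorial : ℝ) * (12:ℕ)))
        ≤ 1 * ((Nat.succ 12 : ℕ) / (((12:ℕ).factorial : ℝ) * (12:ℕ))) := by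
          apply mul_le_mul_of_nonneg_right hxp
          positivity
      _ ≤ 0.000000003 := by norm_num [Nat.factorial]
  have hsum : ∑ m ∈ Finset.range 12, (0.46305536:ℝ) ^ m / m.factorial ≤ 1.58892131 := by
    simp only [Finset.sum_range_succ, Finset.sum_range_zero, Nat.factorial]
    norm_num
  have := h2
  push_cast at this hrem
  linarith

/-- The key numeric inequality: `exp (1 + 1/Z) ≤ 2 Z` for `Z = 2.159569`. -/
lemma key_numeric : (1 : ℝ) + 1 / 2.159569 ≤ Real.log 2 + Real.log 2.159569 := by
  have h1 : Real.log 2 + Real.log 2.159569 = Real.log 4.319138 := by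
    rw [← Real.log_mul (by norm_num) (by norm_num)]
    norm_num
  rw [h1, Real.le_log_iff_exp_le (by norm_num)]
  have h2 : (1 : ℝ) + 1 / 2.159569 ≤ 1 + 0.46305536 := by norm_num
  calc Real.exp (1 + 1 / 2.159569) ≤ Real.exp (1 + 0.46305536) := Real.exp_le_exp.mpr h2
    _ = Real.exp 1 * Real.exp 0.46305536 := Real.exp_add 1 0.46305536
    _ ≤ 2.7182818286 * 1.5889214 := by
        apply mul_le_mul Real.exp_one_lt_d9.le exp_aux_le (Real.exp_pos _).le (by norm_num)
    _ ≤ 4.319138 := by norm_num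

/-- Monotonicity of `y ↦ y (1 + log L - log y)` for `y ≥ L`. -/
lemma mono_aux (L y₁ y₂ : ℝ) (hL : 0 < L) (h1 : L ≤ y₁) (h12 : y₁ ≤ y₂) :
    y₂ * (1 + Real.log L - Real.log y₂) ≤ y₁ * (1 + Real.log L - Real.log y₁) := by
  have hy1 : 0 < y₁ := lt_of_lt_of_le hL h1
  have hy2 : 0 < y₂ := lt_of_lt_of_le hy1 h12
  have hq : Real.log L ≤ Real.log y₁ := Real.log_le_log hL h1
  have hd : Real.log y₁ ≤ Real.log y₂ := Real.log_le_log hy1 h12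
  -- log (y₁/y₂) ≤ y₁/y₂ - 1
  have h3 : Real.log (y₁ / y₂) ≤ y₁ / y₂ - 1 := Real.log_le_sub_one_of_pos (by positivity)
  rw [Real.log_div (ne_of_gt hy1) (ne_of_gt hy2)] at h3
  -- so y₂ * (log y₂ - log y₁) ≥ y₂ - y₁
  have h4 : y₂ - y₁ ≤ y₂ * (Real.log y₂ - Real.log y₁) := by
    have := mul_le_mul_of_nonneg_left h3 hy2.le
    have hinv : y₂ * (y₁ / y₂) = y₁ := by field_simp
    nlinarith
  have h5 : (y₂ - y₁) * (1 + Real.log L - Real.log y₁) ≤ (y₂ - y₁) * 1 := by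
    apply mul_le_mul_of_nonneg_left (by linarith) (by linarith)
  nlinarith

theorem remainder_le_half_lower_bound (k : ℕ) (hk : 61 < k) (s : ℕ) (hs : 0 < s)
    (h : ((s : ℝ) + 1) ≥ 2.159569 *
      Real.log (2 * Ck k * Dk k * Real.exp Real.eulerMascheroniConstant * (Real.log (pk k))^2)) :
    Ck k * Real.log (pk k) *
        ((Real.exp 1 * Real.log (Ck k * Real.log (pk k))) / ((s : ℝ) + 1)) ^ (s + 1) ≤
      1 / (2 * Real.exp Real.eulerMascheroniConstant * Dk k * Real.log (pk k)) := by
  set γ := Real.eulerMascheroniConstant with hγdef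
  set t := Real.log (pk k) with htdef
  -- pk k ≥ 63
  have hpknat : 62 ≤ Nat.nth Nat.Prime (k - 1) := by
    have := Nat.add_two_le_nth_prime (k - 1)
    omega
  have hpk : (62 : ℝ) ≤ pk k := by
    unfold pk; exact_mod_cast hpknat
  have hpkpos : (0 : ℝ) < pk k := by linarith
  have ht4 : (4 : ℝ) ≤ t := by
    rw [htdef, Real.le_log_iff_exp_le hpkpos]
    have h1 : Real.exp 4 = Real.exp 1 ^ (4 : ℕ) := by
      rw [← Real.exp_nat_mul]; norm_num
    have h2 : Real.exp 1 ^ (4 : ℕ) ≤ 2.7182818286 ^ (4 : ℕ) :=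
      pow_le_pow_left₀ (Real.exp_pos 1).le Real.exp_one_lt_d9.le 4
    have h3 : (2.7182818286 : ℝ) ^ (4 : ℕ) ≤ 62 := by norm_num
    linarith
  have ht0 : 0 < t := by linarith
  have ht2 : (32 : ℝ) ≤ 2 * t ^ 2 := by nlinarith
  have hCk : Ck k = Real.exp (0.261498 + 1 / (2 * t ^ 2)) := rfl
  have hCkpos : 0 < Ck k := by rw [hCk]; exact Real.exp_pos _
  have hDval : Dk k = 2 * t ^ 2 / (2 * t ^ 2 - 1) := rfl
  have hD1 : 1 ≤ Dk k := by
    rw [hDval, le_div_iff₀ (by linarith)]; linarith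
  have hDpos : 0 < Dk k := by linarith
  have hlogD : 0 ≤ Real.log (Dk k) := Real.log_nonneg hD1
  have hγpos : 0 < γ := lt_trans (by norm_num) Real.one_half_lt_eulerMascheroniConstant
  have hinv : 1 / (2 * t ^ 2) ≤ 1 / 32 := by
    apply one_div_le_one_div_of_le (by norm_num) ht2
  have hinvpos : 0 ≤ 1 / (2 * t ^ 2) := by positivity
  have hlogt : (1.386 : ℝ) ≤ Real.log t := by
    have h4 : Real.log 4 ≤ Real.log t := Real.log_le_log (by norm_num) ht4
    have h5 : Real.log 4 = 2 * Real.log 2 := by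
      rw [show (4 : ℝ) = 2 ^ (2 : ℕ) by norm_num, Real.log_pow]; push_cast; ring
    have := Real.log_two_gt_d9
    linarith
  set L := Real.log (Ck k * t) with hLdef
  have hLval : L = 0.261498 + 1 / (2 * t ^ 2) + Real.log t := by
    rw [hLdef, Real.log_mul (ne_of_gt hCkpos) (ne_of_gt ht0), hCk, Real.log_exp]
  have hL1 : 1 ≤ L := by rw [hLval]; linarith
  have hLpos : 0 < L := by linarith
  set c := Real.log 2 + γ + Real.log (Dk k) + Real.log t with hcdef
  have hlog2 := Real.log_two_gt_d9
  have hcL : L ≤ c := by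
    rw [hLval, hcdef]; linarith
  set a := L + c with hadef
  have ha2L : 2 * L ≤ a := by linarith
  have hapos : 0 < a := by linarith
  -- log of the big product
  have hA : Real.log (2 * Ck k * Dk k * Real.exp γ * t ^ 2) = a := by
    rw [Real.log_mul (by positivity) (by positivity),
        Real.log_mul (by positivity) (ne_of_gt (Real.exp_pos _)),
        Real.log_mul (by positivity) (ne_of_gt hDpos),
        Real.log_mul (by norm_num) (ne_of_gt hCkpos),
        Real.log_exp, Real.log_pow, hCk, Real.log_exp, hadef, hcdef, hLval]
    push_cast; ring
  rw [hA] at h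
  set y : ℝ := (s : ℝ) + 1 with hydef
  have hypos : (0 : ℝ) < y := by positivity
  -- final inequality at y₁ = Z a
  have hZa : L ≤ 2.159569 * a := by nlinarith
  have hloga : Real.log 2 + Real.log L ≤ Real.log a := by
    have h1 : Real.log (2 * L) ≤ Real.log a := Real.log_le_log (by linarith) (by linarith)
    rw [Real.log_mul (by norm_num) (ne_of_gt hLpos)] at h1
    exact h1
  have hstep2 : a + (2.159569 * a) * (1 + Real.log L - Real.log (2.159569 * a)) ≤ 0 := by
    have hlogZa : Real.log (2.159569 * a) = Real.log 2.159569 + Real.log a :=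
      Real.log_mul (by norm_num) (ne_of_gt hapos)
    have hq : 1 + Real.log L - Real.log (2.159569 * a) ≤ -(1 / 2.159569) := by
      rw [hlogZa]
      have := key_numeric
      linarith
    have h6 : (2.159569 * a) * (1 + Real.log L - Real.log (2.159569 * a))
        ≤ (2.159569 * a) * (-(1 / 2.159569)) :=
      mul_le_mul_of_nonneg_left hq (by positivity)
    have h7 : (2.159569 : ℝ) * a * (-(1 / 2.159569)) = -a := by
      ring
    linarith
  have hmono := mono_aux L (2.159569 * a) y hLpos hZa h
  have hfinal : a + y * (1 + Real.log L - Real.log y) ≤ 0 :=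
    le_trans (add_le_add_right hmono a) hstep2
  -- convert the goal
  have hRpos : 0 < 2 * Real.exp γ * Dk k * t := by positivity
  rw [le_div_iff₀ hRpos]
  have hbase : 0 < Real.exp 1 * L / y := by positivity
  have hpow : (Real.exp 1 * L / y) ^ (s + 1) = Real.exp (y * Real.log (Real.exp 1 * L / y)) := by
    rw [show y * Real.log (Real.exp 1 * L / y)
        = ((s + 1 : ℕ) : ℝ) * Real.log (Real.exp 1 * L / y) by push_cast [hydef]; ring,
      Real.exp_nat_mul, Real.exp_log hbase]
  have hlogbase : Real.log (Real.exp 1 * L / y) = 1 + Real.log L - Real.log y := by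
    rw [Real.log_div (by positivity) (ne_of_gt hypos),
      Real.log_mul (Real.exp_ne_zero 1) (ne_of_gt hLpos), Real.log_exp]
  have hexpa : Real.exp a = 2 * Ck k * Dk k * Real.exp γ * t ^ 2 := by
    rw [← hA, Real.exp_log (by positivity)]
  calc Ck k * t * (Real.exp 1 * L / y) ^ (s + 1) * (2 * Real.exp γ * Dk k * t)
      = (2 * Ck k * Dk k * Real.exp γ * t ^ 2) * (Real.exp 1 * L / y) ^ (s + 1) := by ring
    _ = Real.exp a * Real.exp (y * Real.log (Real.exp 1 * L / y)) := by
        rw [hexpa, hpow]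
    _ = Real.exp (a + y * Real.log (Real.exp 1 * L / y)) := (Real.exp_add _ _).symm
    _ ≤ Real.exp 0 := by
        apply Real.exp_le_exp.mpr
        rw [hlogbase]
        exact hfinal
    _ = 1 := Real.exp_zero
end

section
/- Let n be squarefree with ω(n) = k, P = Π_{p|n}(1 − 1/p), and for odd s ≥ 1 let T'_s = Σ_{r=s+1}^{k} (−1)^r Σ_{d|n, ω(d)=r} 1/d. If P > T'_s and Q is a positive integer with k^s/(P − T'_s) < Q, then g(n) ≤ Q (Stevens' criterion). -/
/-!
Fix a window `(a, b]`. Truncating inclusion–exclusion after an odd number `s` of terms gives a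
Bonferroni lower bound for the indicator of `gcd(x, n) = 1`: if `t ≥ 1` primes of `n` divide `x`,
the truncated sum is `∑_{r ≤ s} (-1)^r C(t, r) = -C(t - 1, s) ≤ 0`. Summing over the window and
replacing each count of multiples of `d` by `(b - a) / d` costs at most `1` per divisor `d > 1`,
hence at most `∑_{1 ≤ r ≤ s} C(k, r) ≤ k ^ s` in total, while the main term is `(b - a) (P - T'_s)`.
So a window of length `Q > k ^ s / (P - T'_s)` contains an integer coprime to `n`.
-/

noncomputable def jacobsthal (n : ℕ) : ℕ :=
  sInf {Q : ℕ | 0 < Q ∧ ∀ m : ℤ, ∃ i : ℕ, 1 ≤ i ∧ i ≤ Q ∧ IsCoprime (m + i) (n : ℤ)}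

open Finset

theorem alternating_sum_range_choose_le_of_odd {s : ℕ} (hs : Odd s) (t : ℕ) :
    ∑ r ∈ range (s + 1), (-1) ^ r * (t.choose r : ℤ) ≤ if t = 0 then 1 else 0 := by
  cases t with
  | zero => simp [sum_range_succ']
  | succ t =>
    rw [Int.alternating_sum_range_choose_eq_choose, hs.neg_one_pow, if_neg t.succ_ne_zero]
    simp

theorem sum_range_choose_succ_le_pow (k s : ℕ) : ∑ r ∈ range s, k.choose (r + 1) ≤ k ^ s := by
  rcases Nat.eq_zero_or_pos s with rfl | hs
  · simp
  induction s, hs using Nat.le_induction with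
  | base => simp
  | succ s _ ih =>
    have hchoose : k.choose (s + 1) ≤ k ^ s * (k - 1) :=
      calc k.choose (s + 1) ≤ k.choose (s + 1) * (s + 1) := Nat.le_mul_of_pos_right _ s.succ_pos
        _ = k.choose s * (k - s) := Nat.choose_succ_right_eq k s
        _ ≤ k ^ s * (k - 1) := Nat.mul_le_mul (Nat.choose_le_pow k s) (by omega)
    have hpow : k ^ s + k ^ s * (k - 1) = k ^ (s + 1) := by
      rcases k with _ | k
      · simp [Nat.pos_iff_ne_zero.1 ‹_›]
      · simp [pow_succ]; ring
    rw [sum_range_succ]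
    omega

theorem sum_range_sub_sum_Icc_of_eq_zero {M : Type*} [AddCommGroup M] {f : ℕ → M} {k : ℕ}
    (hf : ∀ r, k < r → f r = 0) (s : ℕ) :
    ∑ r ∈ range (k + 1), f r - ∑ r ∈ Icc (s + 1) k, f r = ∑ r ∈ range (s + 1), f r := by
  rcases le_total s k with hsk | hks
  · rw [← Ico_add_one_right_eq_Icc, sub_eq_iff_eq_add, sum_range_add_sum_Ico f (by omega)]
  · rw [Icc_eq_empty (by omega), sum_empty, sub_zero,
      ← sum_range_add_sum_Ico f (show k + 1 ≤ s + 1 by omega), left_eq_add]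
    exact sum_eq_zero fun r hr => hf r (by simp at hr; omega)

theorem Int.abs_card_Ioc_filter_dvd_sub_le {a b d : ℤ} (hab : a ≤ b) (hd : 0 < d) :
    |(#{x ∈ Ioc a b | d ∣ x} : ℝ) - (b - a) / d| ≤ 1 := by
  have hfl : ⌊(a / d : ℚ)⌋ ≤ ⌊(b / d : ℚ)⌋ :=
    Int.floor_le_floor (div_le_div_of_nonneg_right (by exact_mod_cast hab) (by positivity))
  have hcard := Int.Ioc_filter_dvd_card a b hd
  rw [max_eq_left (by omega)] at hcard
  have ha := Int.floor_le (a / d : ℚ)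
  have ha' := Int.lt_floor_add_one (a / d : ℚ)
  have hb := Int.floor_le (b / d : ℚ)
  have hb' := Int.lt_floor_add_one (b / d : ℚ)
  have key : |(((#{x ∈ Ioc a b | d ∣ x} : ℕ) : ℤ) : ℚ) - (b - a) / d| ≤ 1 := by
    rw [hcard, abs_le, sub_div]; push_cast; constructor <;> linarith
  exact_mod_cast key

def divisorsWithOmega (n r : ℕ) : Finset ℕ := n.divisors.filter (fun d => d.primeFactors.card = r)

section

variable {n : ℕ}

theorem Squarefree.sum_divisors_eq_sum_powerset_primeFactors (hn : Squarefree n)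
    {M : Type*} [AddCommMonoid M] (f : ℕ → M) :
    ∑ d ∈ n.divisors, f d = ∑ A ∈ n.primeFactors.powerset, f (∏ p ∈ A, p) := by
  rw [← Nat.divisors_filter_squarefree_of_squarefree hn,
    Nat.sum_divisors_filter_squarefree hn.ne_zero]
  simp [Nat.factors_eq, prod_val]

theorem sum_divisorsWithOmega (hn : Squarefree n) {M : Type*} [AddCommMonoid M] (r : ℕ)
    (f : ℕ → M) :
    ∑ d ∈ divisorsWithOmega n r, f d = ∑ A ∈ n.primeFactors.powersetCard r, f (∏ p ∈ A, p) := by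
  rw [divisorsWithOmega, sum_filter, hn.sum_divisors_eq_sum_powerset_primeFactors,
    powersetCard_eq_filter, sum_filter]
  refine sum_congr rfl fun A hA => ?_
  rw [Nat.primeFactors_prod fun p hp => Nat.prime_of_mem_primeFactors (mem_powerset.1 hA hp)]

theorem sum_divisorsWithOmega_zero (hn : Squarefree n) {M : Type*} [AddCommMonoid M] (f : ℕ → M) :
    ∑ d ∈ divisorsWithOmega n 0, f d = f 1 := by
  simp [sum_divisorsWithOmega hn]

theorem card_divisorsWithOmega (hn : Squarefree n) (r : ℕ) :
    #(divisorsWithOmega n r) = (#n.primeFactors).choose r := by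
  rw [card_eq_sum_ones, sum_divisorsWithOmega hn, sum_const, card_powersetCard, smul_eq_mul,
    mul_one]

theorem card_filter_dvd_divisorsWithOmega (hn : Squarefree n) (r y : ℕ) :
    #{d ∈ divisorsWithOmega n r | d ∣ y} = (#{p ∈ n.primeFactors | p ∣ y}).choose r := by
  rw [card_filter, sum_divisorsWithOmega hn, ← card_filter, ← card_powersetCard]
  congr 1
  ext A
  simp only [mem_filter, mem_powersetCard, subset_iff]
  constructor
  · rintro ⟨⟨hAn, rfl⟩, hAy⟩
    exact ⟨fun p hp => ⟨hAn hp, (dvd_prod_of_mem _ hp).trans hAy⟩, rfl⟩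
  · rintro ⟨hA, rfl⟩
    exact ⟨⟨fun p hp => (hA hp).1, rfl⟩, prod_primes_dvd y
      (fun p hp => (Nat.prime_of_mem_primeFactors (hA hp).1).prime) fun p hp => (hA hp).2⟩

theorem Nat.coprime_iff_forall_mem_primeFactors_not_dvd {y : ℕ} (hn : n ≠ 0) :
    y.Coprime n ↔ ∀ p ∈ n.primeFactors, ¬ p ∣ y := by
  refine ⟨fun h p hp hpy => ?_, fun h => Nat.coprime_of_dvd fun p hp hpy hpn => ?_⟩
  · exact (Nat.prime_of_mem_primeFactors hp).one_lt.ne'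
      (Nat.eq_one_of_dvd_coprimes h hpy (Nat.dvd_of_mem_primeFactors hp))
  · exact h p (Nat.mem_primeFactors.2 ⟨hp, hpn, hn⟩) hpy

theorem alternating_sum_card_filter_dvd_le {s : ℕ} (hn : Squarefree n) (hs : Odd s) (y : ℕ) :
    ∑ r ∈ range (s + 1), (-1) ^ r * (#{d ∈ divisorsWithOmega n r | d ∣ y} : ℤ) ≤
      if y.Coprime n then 1 else 0 := by
  simp_rw [card_filter_dvd_divisorsWithOmega hn]
  convert alternating_sum_range_choose_le_of_odd hs _ using 2
  rw [card_eq_zero, filter_eq_empty_iff, Nat.coprime_iff_forall_mem_primeFactors_not_dvd hn.ne_zero]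

theorem alternating_sum_card_filter_dvd_le_card_filter_gcd_eq_one {s : ℕ} (hn : Squarefree n)
    (hs : Odd s) (X : Finset ℤ) :
    ∑ r ∈ range (s + 1), (-1) ^ r * ∑ d ∈ divisorsWithOmega n r, (#{x ∈ X | (d : ℤ) ∣ x} : ℤ) ≤
      #{x ∈ X | Int.gcd x n = 1} := by
  have hswap (r : ℕ) : ∑ d ∈ divisorsWithOmega n r, (#{x ∈ X | (d : ℤ) ∣ x} : ℤ) =
      ∑ x ∈ X, (#{d ∈ divisorsWithOmega n r | d ∣ x.natAbs} : ℤ) := by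
    simp only [card_filter, Int.natCast_dvd, Nat.cast_sum]
    exact sum_comm
  calc ∑ r ∈ range (s + 1), (-1) ^ r * ∑ d ∈ divisorsWithOmega n r, (#{x ∈ X | (d : ℤ) ∣ x} : ℤ)
      = ∑ x ∈ X, ∑ r ∈ range (s + 1),
          (-1) ^ r * (#{d ∈ divisorsWithOmega n r | d ∣ x.natAbs} : ℤ) := by
        simp_rw [hswap, mul_sum]
        exact sum_comm
    _ ≤ ∑ x ∈ X, if Int.gcd x n = 1 then (1 : ℤ) else 0 :=
        sum_le_sum fun x _ => alternating_sum_card_filter_dvd_le hn hs x.natAbs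
    _ = #{x ∈ X | Int.gcd x n = 1} := by rw [sum_boole]

theorem abs_sum_divisorsWithOmega_card_filter_dvd_sub_le (hn : Squarefree n) (r : ℕ) {a b : ℤ}
    (hab : a ≤ b) :
    |∑ d ∈ divisorsWithOmega n r, ((#{x ∈ Ioc a b | (d : ℤ) ∣ x} : ℝ) - (b - a) / d)| ≤
      (#n.primeFactors).choose r := by
  rw [← card_divisorsWithOmega hn, card_eq_sum_ones, Nat.cast_sum, Nat.cast_one]
  refine (abs_sum_le_sum_abs _ _).trans (sum_le_sum fun d hd => ?_)
  have hd : (0 : ℤ) < d := by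
    have := Nat.pos_of_mem_divisors (mem_filter.1 hd).1
    omega
  exact_mod_cast Int.abs_card_Ioc_filter_dvd_sub_le hab hd

theorem le_card_Ioc_filter_gcd_eq_one (hn : Squarefree n) {s : ℕ} (hs : Odd s) {a b : ℤ}
    (hab : a ≤ b) :
    (b - a) * ∑ r ∈ range (s + 1), (-1) ^ r * ∑ d ∈ divisorsWithOmega n r, (1 / d : ℝ) -
        (#n.primeFactors : ℝ) ^ s ≤ #{x ∈ Ioc a b | Int.gcd x n = 1} := by
  set E : ℕ → ℝ := fun r =>
    ∑ d ∈ divisorsWithOmega n r, ((#{x ∈ Ioc a b | (d : ℤ) ∣ x} : ℝ) - (b - a) / d) with hE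
  have hE0 : E 0 = 0 := by
    simp only [hE, sum_divisorsWithOmega_zero hn, Nat.cast_one, isUnit_one, IsUnit.dvd, filter_true,
      Int.card_Ioc, div_one, sub_eq_zero]
    exact_mod_cast Int.toNat_of_nonneg (sub_nonneg.2 hab)
  have herr : |∑ r ∈ range (s + 1), (-1) ^ r * E r| ≤ (#n.primeFactors : ℝ) ^ s :=
    calc |∑ r ∈ range (s + 1), (-1) ^ r * E r| ≤ ∑ r ∈ range (s + 1), |E r| := by
          refine (abs_sum_le_sum_abs _ _).trans_eq (sum_congr rfl fun r _ => ?_)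
          simp [abs_mul]
      _ ≤ ∑ r ∈ range s, ((#n.primeFactors).choose (r + 1) : ℝ) := by
          rw [sum_range_succ', hE0, abs_zero, add_zero]
          exact sum_le_sum fun r _ => abs_sum_divisorsWithOmega_card_filter_dvd_sub_le hn _ hab
      _ ≤ (#n.primeFactors : ℝ) ^ s := by
          exact_mod_cast sum_range_choose_succ_le_pow _ s
  have hsplit : ∑ r ∈ range (s + 1), (-1) ^ r *
        ∑ d ∈ divisorsWithOmega n r, (#{x ∈ Ioc a b | (d : ℤ) ∣ x} : ℝ) =
      (b - a) * ∑ r ∈ range (s + 1), (-1) ^ r * ∑ d ∈ divisorsWithOmega n r, (1 / d : ℝ) +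
        ∑ r ∈ range (s + 1), (-1) ^ r * E r := by
    simp only [hE, mul_sum, ← sum_add_distrib]
    refine sum_congr rfl fun r _ => sum_congr rfl fun d _ => ?_
    ring
  have hsieve : (∑ r ∈ range (s + 1), (-1) ^ r *
        ∑ d ∈ divisorsWithOmega n r, (#{x ∈ Ioc a b | (d : ℤ) ∣ x} : ℝ)) ≤
      #{x ∈ Ioc a b | Int.gcd x n = 1} := by
    exact_mod_cast alternating_sum_card_filter_dvd_le_card_filter_gcd_eq_one hn hs (Ioc a b)
  linarith [abs_le.1 herr]

theorem prod_one_sub_inv_primeFactors_eq (hn : Squarefree n) :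
    ∏ p ∈ n.primeFactors, (1 - 1 / (p : ℝ)) =
      ∑ r ∈ range (#n.primeFactors + 1), (-1) ^ r * ∑ d ∈ divisorsWithOmega n r, (1 / d : ℝ) := by
  rw [prod_sub, sum_powerset]
  refine sum_congr rfl fun r _ => ?_
  rw [sum_divisorsWithOmega hn, mul_sum]
  refine sum_congr rfl fun A hA => ?_
  simp [(mem_powersetCard.1 hA).2, Nat.cast_prod]

end

theorem stevens_criterion_general (n k : ℕ) (hn : Squarefree n) (hk : n.primeFactors.card = k)
    (s : ℕ) (hs : Odd s)
    (P T' : ℝ)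
    (hP : P = ∏ p ∈ n.primeFactors, (1 - 1 / (p : ℝ)))
    (hT : T' = ∑ r ∈ Finset.Icc (s + 1) k,
      (-1 : ℝ) ^ r * ∑ d ∈ n.divisors.filter (fun d => d.primeFactors.card = r), (1 : ℝ) / d)
    (hPT : T' < P) (Q : ℕ) (hQ : 0 < Q) (hlt : (k : ℝ) ^ s / (P - T') < Q) :
    jacobsthal n ≤ Q := by
  have hmain : P - T' =
      ∑ r ∈ range (s + 1), (-1) ^ r * ∑ d ∈ divisorsWithOmega n r, (1 / d : ℝ) := by
    rw [hP, hT, prod_one_sub_inv_primeFactors_eq hn, hk]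
    refine sum_range_sub_sum_Icc_of_eq_zero (fun r hr => ?_) s
    have hempty : divisorsWithOmega n r = ∅ := by
      rw [← card_eq_zero, card_divisorsWithOmega hn, hk, Nat.choose_eq_zero_of_lt hr]
    rw [hempty, sum_empty, mul_zero]
  have hQlarge : (k : ℝ) ^ s < Q * (P - T') := by
    rw [div_lt_iff₀ (sub_pos.2 hPT)] at hlt
    linarith
  refine Nat.sInf_le ⟨hQ, fun m => ?_⟩
  have hcount := le_card_Ioc_filter_gcd_eq_one hn hs (le_add_of_nonneg_right (Nat.cast_nonneg Q) :
    m ≤ m + Q)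
  rw [← hmain, hk] at hcount
  push_cast at hcount
  rw [add_sub_cancel_left] at hcount
  have hpos : (0 : ℝ) < #{x ∈ Ioc m (m + Q) | Int.gcd x n = 1} := by linarith
  obtain ⟨x, hx⟩ := card_pos.1 (by exact_mod_cast hpos)
  rw [mem_filter, mem_Ioc] at hx
  refine ⟨(x - m).toNat, by omega, by omega, ?_⟩
  rw [Int.isCoprime_iff_gcd_eq_one, ← hx.2]
  congr 1
  omega

theorem stevens_criterion (n k : ℕ) (hn : Squarefree n) (hk : n.primeFactors.card = k)
    (s : ℕ) (hs : Odd s) (hs1 : 1 ≤ s)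
    (P T' : ℝ)
    (hP : P = ∏ p ∈ n.primeFactors, (1 - 1 / (p : ℝ)))
    (hT : T' = ∑ r ∈ Finset.Icc (s + 1) k,
      (-1 : ℝ) ^ r * ∑ d ∈ n.divisors.filter (fun d => d.primeFactors.card = r), (1 : ℝ) / d)
    (hPT : T' < P) (Q : ℕ) (hQ : 0 < Q) (hlt : (k : ℝ) ^ s / (P - T') < Q) :
    jacobsthal n ≤ Q :=
  stevens_criterion_general n k hn hk s hs P T' hP hT hPT Q hQ hlt
end
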